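/- If δ̂(a, a') = δ(a, a') for every pair of outcomes a, a', then f : V × B → A with fully private budgets is implementable if and only if the graph G_{f,B} contains no negative cycle. -/

import Mathlib

noncomputable section

open scoped Classical

variable {A : Type*} {N : Type*}

/-- minimum reported budget required to obtain outcome `a` -/
def beta (V : Set (A → ℝ)) (Bud : Set EReal) (f : (A → ℝ) → EReal → A) (a : A) : EReal :=
  sInf {B | B ∈ Bud ∧ ∃ v ∈ V, f v B = a}

/-- minimum reported value required to obtain outcome `a` -/
def omegaV (V : Set (A → ℝ)) (Bud : Set EReal) (f : (A → ℝ) → EReal → A) (a : A) : EReal :=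
  sInf {x : EReal | ∃ v ∈ V, ∃ B ∈ Bud, f v B = a ∧ x = ((v a : ℝ) : EReal)}

def theta (V : Set (A → ℝ)) (Bud : Set EReal) (f : (A → ℝ) → EReal → A) (a : A) : EReal :=
  min (beta V Bud f a) (omegaV V Bud f a)

def delta (V : Set (A → ℝ)) (Bud : Set EReal) (f : (A → ℝ) → EReal → A) (a a' : A) : EReal :=
  sInf {x : EReal | ∃ v ∈ V, ∃ B ∈ Bud, beta V Bud f a' ≤ B ∧ f v B = a ∧
    x = ((v a - v a' : ℝ) : EReal)}

def deltaHat (V : Set (A → ℝ)) (Bud : Set EReal) (f : (A → ℝ) → EReal → A) (a a' : A) : EReal :=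
  sInf {x : EReal | ∃ v ∈ V, ∃ B ∈ Bud, f v B = a ∧ x = ((v a - v a' : ℝ) : EReal)}

/-- arc length of the graph `G_{f,B}` -/
def glen (V : Set (A → ℝ)) (Bud : Set EReal) (f : (A → ℝ) → EReal → A) (a a' : A) : EReal :=
  min (delta V Bud f a a') (theta V Bud f a)

/-- arc length of the graph `Ĝ_{f,B}` -/
def glenHat (V : Set (A → ℝ)) (Bud : Set EReal) (f : (A → ℝ) → EReal → A) (a a' : A) : EReal :=
  min (deltaHat V Bud f a a') (theta V Bud f a)

/-- length of the closed walk through the nodes of the list `c` -/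
def cycLen (l : N → N → EReal) (c : List N) : EReal :=
  ((c.zip (c.rotate 1)).map fun pr => l pr.1 pr.2).sum

def NoNegCycle (l : N → N → EReal) : Prop :=
  ∀ c : List N, c ≠ [] → 0 ≤ cycLen l c

def pathLen (l : N → N → EReal) : List N → EReal
  | [] => 0
  | [_] => 0
  | x :: y :: t => l x y + pathLen l (y :: t)

/-- shortest-path distance from `i` to `k` in the complete graph with lengths `l` -/
def distG (l : N → N → EReal) (i k : N) : EReal :=
  sInf (pathLen l '' {c : List N | c.head? = some i ∧ c.getLast? = some k})

def Onto (V : Set (A → ℝ)) (Bud : Set EReal) (f : (A → ℝ) → EReal → A) : Prop :=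
  ∀ a : A, ∃ v ∈ V, ∃ B ∈ Bud, f v B = a

def NonnegV (V : Set (A → ℝ)) : Prop := ∀ v ∈ V, ∀ a, 0 ≤ v a

def NonnegB (Bud : Set EReal) : Prop := ∀ B ∈ Bud, 0 ≤ B

/-- `p` gives per-outcome prices implementing `f` : full incentive compatibility
(arbitrary misreports of value and budget), IR, BF and NPT. -/
def Implements (V : Set (A → ℝ)) (Bud : Set EReal) (f : (A → ℝ) → EReal → A)
    (p : A → ℝ) : Prop :=
  (∀ v ∈ V, ∀ B ∈ Bud, ∀ v' ∈ V, ∀ B' ∈ Bud,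
      ((p (f v' B') : ℝ) : EReal) ≤ B →
      v (f v' B') - p (f v' B') ≤ v (f v B) - p (f v B)) ∧
  (∀ v ∈ V, ∀ B ∈ Bud, p (f v B) ≤ v (f v B)) ∧
  (∀ v ∈ V, ∀ B ∈ Bud, ((p (f v B) : ℝ) : EReal) ≤ B) ∧
  (∀ v ∈ V, ∀ B ∈ Bud, 0 ≤ p (f v B))

/-- as `Implements`, but budget over-reporting is impossible: `B' ≤ B`. -/
def ImplementsNoOver (V : Set (A → ℝ)) (Bud : Set EReal) (f : (A → ℝ) → EReal → A)
    (p : A → ℝ) : Prop :=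
  (∀ v ∈ V, ∀ B ∈ Bud, ∀ v' ∈ V, ∀ B' ∈ Bud, B' ≤ B →
      ((p (f v' B') : ℝ) : EReal) ≤ B →
      v (f v' B') - p (f v' B') ≤ v (f v B) - p (f v B)) ∧
  (∀ v ∈ V, ∀ B ∈ Bud, p (f v B) ≤ v (f v B)) ∧
  (∀ v ∈ V, ∀ B ∈ Bud, ((p (f v B) : ℝ) : EReal) ≤ B) ∧
  (∀ v ∈ V, ∀ B ∈ Bud, 0 ≤ p (f v B))

/-- arcs of the augmented graph `H` : `none` is the special node `0`. -/
def HArc (d : A → A → EReal) : Option A → Option A → Prop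
  | some i, some k => d i k < ⊤
  | none, some _ => True
  | some _, none => True
  | none, none => False

/-- arc lengths of the augmented graph `H`. -/
def HLen (d : A → A → EReal) (t : A → EReal) : Option A → Option A → EReal
  | some i, some k => d i k
  | none, some _ => 0
  | some i, none => t i
  | none, none => 0

def NoNegCycleH (d : A → A → EReal) (t : A → EReal) : Prop :=
  ∀ c : List (Option A), c ≠ [] →
    (∀ pr ∈ c.zip (c.rotate 1), HArc d pr.1 pr.2) →
    0 ≤ cycLen (HLen d t) c

/-- shortest-path distance from node `i` to the special node `0` in `H`. -/
def distH (d : A → A → EReal) (t : A → EReal) (i : A) : EReal :=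
  sInf (pathLen (HLen d t) ''
    {c : List (Option A) | c.head? = some (some i) ∧ c.getLast? = some none ∧
      ∀ pr ∈ c.zip c.tail, HArc d pr.1 pr.2})

/-! Necessity: implementing prices `p` satisfy `p a - p a' ≤ δ(a, a')`, since a type that gets `a`
with a budget of at least `β(a') ≥ p a'` can afford to deviate to `a'`, and
`p a - p a' ≤ p a ≤ θ(a)` by no positive transfers, individual rationality and budget feasibility.
So `p` is a potential for `G_{f,B}` and every cycle telescopes to a nonnegative length.

Sufficiency: when `δ̂ = δ` the graph `G_{f,B}` is `Ĝ_{f,B}`. Add a sink reached from each `a` by an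
arc of length `θ(a)`; without negative cycles the distances to the sink are finite, nonnegative,
at most `θ`, and a potential for `Ĝ_{f,B}`. Taken as prices they are implementable because
`δ̂(a, a') ≤ v a - v a'` for every type `(v, B)` that is assigned `a`.
-/

section Walks

variable (l : N → N → EReal)

lemma pathLen_cons_cons (x y : N) (t : List N) :
    pathLen l (x :: y :: t) = l x y + pathLen l (y :: t) := rfl

lemma pathLen_append : ∀ (xs : List N) (y : N) (ys : List N),
    pathLen l (xs ++ y :: ys) = pathLen l (xs ++ [y]) + pathLen l (y :: ys)
  | [], y, ys => by simp [pathLen]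
  | [x], y, ys => by simp [pathLen]
  | x :: x' :: xs, y, ys => by
    have ih := pathLen_append (x' :: xs) y ys
    simp only [List.cons_append] at ih ⊢
    rw [pathLen_cons_cons, pathLen_cons_cons, ih, add_assoc]

lemma sum_map_zip_append_singleton : ∀ (t : List N) (x y : N),
    (((x :: t).zip (t ++ [y])).map fun pr => l pr.1 pr.2).sum
      = pathLen l (x :: t) + l ((x :: t).getLast (List.cons_ne_nil x t)) y
  | [], x, y => by simp [pathLen]
  | z :: t, x, y => by
    simp only [List.cons_append, List.zip_cons_cons, List.map_cons, List.sum_cons,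
      pathLen_cons_cons, sum_map_zip_append_singleton t z y, List.getLast_cons_cons, add_assoc]

lemma cycLen_cons (x : N) (t : List N) :
    cycLen l (x :: t) = pathLen l (x :: t) + l ((x :: t).getLast (List.cons_ne_nil x t)) x := by
  rw [cycLen, List.rotate_cons_succ, List.rotate_zero, sum_map_zip_append_singleton]

lemma cycLen_mono {l l' : N → N → EReal} (h : ∀ a b, l a b ≤ l' a b) (c : List N) :
    cycLen l c ≤ cycLen l' c :=
  List.sum_le_sum fun pr _ => h pr.1 pr.2

lemma pathLen_sub (g : N → ℝ) : ∀ (x : N) (t : List N),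
    pathLen (fun a b => ((g a - g b : ℝ) : EReal)) (x :: t)
      = ((g x - g ((x :: t).getLast (List.cons_ne_nil x t)) : ℝ) : EReal)
  | x, [] => by simp [pathLen]
  | x, y :: t => by
    rw [pathLen_cons_cons, pathLen_sub g y t, List.getLast_cons_cons, ← EReal.coe_add]
    ring_nf

lemma cycLen_sub (g : N → ℝ) (c : List N) :
    cycLen (fun a b => ((g a - g b : ℝ) : EReal)) c = 0 := by
  cases c with
  | nil => rfl
  | cons x t =>
    rw [cycLen_cons, pathLen_sub, ← EReal.coe_add]
    simp

lemma noNegCycle_of_sub_le (g : N → ℝ) (h : ∀ a b, ((g a - g b : ℝ) : EReal) ≤ l a b) :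
    NoNegCycle l := fun c _ =>
  (cycLen_sub g c).symm.le.trans (cycLen_mono h c)

lemma NoNegCycle.ne_bot {l : N → N → EReal} (h : NoNegCycle l) (a b : N) : l a b ≠ ⊥ := by
  intro hbot
  have := h [a, b] (List.cons_ne_nil a _)
  simp [cycLen_cons, pathLen, hbot] at this

end Walks

section AugmentedGraph

variable (d : A → A → EReal) (t : A → EReal)

lemma pathLen_HLen_none_cons (c : List (Option A)) :
    pathLen (HLen d t) (none :: c) = pathLen (HLen d t) c := by
  rcases c with _ | ⟨o, c⟩
  · rfl
  · rw [pathLen_cons_cons, show HLen d t none o = 0 by cases o <;> rfl, zero_add]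

lemma pathLen_HLen_map_some_append_none : ∀ (L : List A) (hL : L ≠ []),
    pathLen (HLen d t) (L.map some ++ [none]) = pathLen d L + t (L.getLast hL)
  | [a], _ => by simp [pathLen, HLen]
  | a :: b :: L, _ => by
    have ih := pathLen_HLen_map_some_append_none (b :: L) (List.cons_ne_nil b L)
    simp only [List.map_cons, List.cons_append] at ih ⊢
    rw [pathLen_cons_cons, pathLen_cons_cons, ih, List.getLast_cons_cons, add_assoc]
    rfl

variable {d t}

lemma pathLen_HLen_map_some_append_none_nonneg (hnc : NoNegCycle d)
    (hdt : ∀ a a', d a a' ≤ t a) (L : List A) :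
    0 ≤ pathLen (HLen d t) (L.map some ++ [none]) := by
  rcases L with _ | ⟨x, L⟩
  · exact le_rfl
  · rw [pathLen_HLen_map_some_append_none d t _ (List.cons_ne_nil x L)]
    calc (0 : EReal) ≤ cycLen d (x :: L) := hnc _ (List.cons_ne_nil x L)
      _ ≤ _ := by rw [cycLen_cons]; exact add_le_add_right (hdt _ _) _

/-- Cutting a walk of `H` at each visit of the special node leaves walks `L.map some ++ [none]`,
each of which closes up into a cycle of `G` once the last arc, of length `t`, is shortened to `d`. -/
lemma pathLen_HLen_nonneg (hnc : NoNegCycle d) (hdt : ∀ a a', d a a' ≤ t a) :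
    ∀ (c : List (Option A)) (L : List A), c.getLast? = some none →
      0 ≤ pathLen (HLen d t) (L.map some ++ c)
  | [], _, h => by simp at h
  | none :: c, L, h => by
    rw [pathLen_append, pathLen_HLen_none_cons]
    refine add_nonneg (pathLen_HLen_map_some_append_none_nonneg hnc hdt L) ?_
    rcases c with _ | ⟨o, c⟩
    · exact le_rfl
    · simpa using pathLen_HLen_nonneg hnc hdt (o :: c) [] (by simpa using h)
  | some a :: c, L, h => by
    rcases c with _ | ⟨o, c⟩
    · simp at h
    · simpa using pathLen_HLen_nonneg hnc hdt (o :: c) (L ++ [a]) (by simpa using h)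

end AugmentedGraph

section ShortestPath

variable {d : A → A → EReal} {t : A → EReal}

lemma distH_nonneg (hnc : NoNegCycle d) (hdt : ∀ a a', d a a' ≤ t a) (a : A) :
    0 ≤ distH d t a := by
  refine le_sInf ?_
  rintro _ ⟨c, ⟨-, hc, -⟩, rfl⟩
  exact pathLen_HLen_nonneg hnc hdt c [] hc

lemma distH_le (a : A) : distH d t a ≤ t a :=
  sInf_le ⟨[some a, none], ⟨rfl, rfl, by simp [HArc]⟩, by simp [pathLen, HLen]⟩

lemma distH_le_coe_add {a a' : A} {r : ℝ} (hr : d a a' = r) :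
    distH d t a ≤ r + distH d t a' := by
  have hsub : distH d t a - r ≤ distH d t a' := by
    refine le_sInf ?_
    rintro _ ⟨c, ⟨hh, hl, harc⟩, rfl⟩
    rcases c with _ | ⟨o, c⟩
    · simp at hh
    obtain rfl : o = some a' := by simpa using hh
    rw [EReal.sub_le_iff_le_add (.inl (EReal.coe_ne_bot r)) (.inl (EReal.coe_ne_top r)), add_comm]
    refine sInf_le ⟨some a :: some a' :: c, ⟨rfl, by simpa using hl, ?_⟩, ?_⟩
    · simp only [List.tail_cons, List.zip_cons_cons, List.mem_cons, forall_eq_or_imp]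
      exact ⟨by simp [HArc, hr], harc⟩
    · rw [pathLen_cons_cons, ← hr]
      rfl
  rwa [EReal.sub_le_iff_le_add (.inl (EReal.coe_ne_bot r)) (.inl (EReal.coe_ne_top r)),
    add_comm] at hsub

lemma exists_potential_of_noNegCycle (hnc : NoNegCycle d) (hdt : ∀ a a', d a a' ≤ t a)
    (ht : ∀ a, t a < ⊤) :
    ∃ g : A → ℝ, (∀ a, 0 ≤ g a) ∧ (∀ a, (g a : EReal) ≤ t a) ∧
      ∀ a a', ((g a - g a' : ℝ) : EReal) ≤ d a a' := by
  have hD_coe (a : A) : ((distH d t a).toReal : EReal) = distH d t a :=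
    EReal.coe_toReal ((distH_le a).trans_lt (ht a)).ne
      (ne_bot_of_le_ne_bot EReal.zero_ne_bot (distH_nonneg hnc hdt a))
  refine ⟨fun a => (distH d t a).toReal, fun a => EReal.toReal_nonneg (distH_nonneg hnc hdt a),
    fun a => (hD_coe a).trans_le (distH_le a), fun a a' => ?_⟩
  have hr : d a a' = ((d a a').toReal : EReal) :=
    (EReal.coe_toReal ((hdt a a').trans_lt (ht a)).ne (hnc.ne_bot a a')).symm
  have h := distH_le_coe_add (t := t) hr
  rw [← hD_coe a, ← hD_coe a', ← EReal.coe_add] at h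
  rw [hr, EReal.coe_le_coe_iff]
  linarith [EReal.coe_le_coe_iff.mp h]

end ShortestPath

section Mechanism

variable {V : Set (A → ℝ)} {Bud : Set EReal} {f : (A → ℝ) → EReal → A}

lemma beta_le {v : A → ℝ} (hv : v ∈ V) {B : EReal} (hB : B ∈ Bud) :
    beta V Bud f (f v B) ≤ B :=
  sInf_le ⟨hB, v, hv, rfl⟩

lemma omegaV_le {v : A → ℝ} (hv : v ∈ V) {B : EReal} (hB : B ∈ Bud) :
    omegaV V Bud f (f v B) ≤ v (f v B) :=
  sInf_le ⟨v, hv, B, hB, rfl, rfl⟩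

lemma deltaHat_le {v : A → ℝ} (hv : v ∈ V) {B : EReal} (hB : B ∈ Bud) (a' : A) :
    deltaHat V Bud f (f v B) a' ≤ ((v (f v B) - v a' : ℝ) : EReal) :=
  sInf_le ⟨v, hv, B, hB, rfl, rfl⟩

lemma theta_lt_top (honto : Onto V Bud f) (a : A) : theta V Bud f a < ⊤ := by
  obtain ⟨v, hv, B, hB, rfl⟩ := honto a
  exact (min_le_right _ _).trans_lt ((omegaV_le hv hB).trans_lt (EReal.coe_lt_top _))

lemma glen_eq_glenHat (hdelta : ∀ a a' : A, deltaHat V Bud f a a' = delta V Bud f a a') :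
    glen V Bud f = glenHat V Bud f := by
  ext a a'
  rw [glen, glenHat, hdelta]

lemma Implements.sub_le_glen {p : A → ℝ} (hp : Implements V Bud f p) (honto : Onto V Bud f)
    (a a' : A) : ((p a - p a' : ℝ) : EReal) ≤ glen V Bud f a a' := by
  obtain ⟨hIC, hIR, hBF, hNPT⟩ := hp
  have hp_beta (a : A) : (p a : EReal) ≤ beta V Bud f a := by
    refine le_sInf ?_
    rintro B ⟨hB, v, hv, rfl⟩
    exact hBF v hv B hB
  have hp_omegaV (a : A) : (p a : EReal) ≤ omegaV V Bud f a := by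
    refine le_sInf ?_
    rintro _ ⟨v, hv, B, hB, rfl, rfl⟩
    exact EReal.coe_le_coe_iff.mpr (hIR v hv B hB)
  obtain ⟨v', hv', B', hB', rfl⟩ := honto a'
  refine le_min (le_sInf ?_) ?_
  · rintro _ ⟨v, hv, B, hB, hβB, rfl, rfl⟩
    have := hIC v hv B hB v' hv' B' hB' ((hp_beta _).trans hβB)
    exact EReal.coe_le_coe_iff.mpr (by linarith)
  · calc ((p a - p (f v' B') : ℝ) : EReal) ≤ p a :=
          EReal.coe_le_coe_iff.mpr (by linarith [hNPT v' hv' B' hB'])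
      _ ≤ theta V Bud f a := le_min (hp_beta a) (hp_omegaV a)

lemma implements_of_potential (g : A → ℝ) (hg_nonneg : ∀ a, 0 ≤ g a)
    (hg_theta : ∀ a, (g a : EReal) ≤ theta V Bud f a)
    (hg_deltaHat : ∀ a a', ((g a - g a' : ℝ) : EReal) ≤ deltaHat V Bud f a a') :
    Implements V Bud f g := by
  refine ⟨fun v hv B hB v' _ B' _ _ => ?_, fun v hv B hB => ?_, fun v hv B hB => ?_,
    fun v _ B _ => hg_nonneg _⟩
  · have := EReal.coe_le_coe_iff.mp ((hg_deltaHat _ (f v' B')).trans (deltaHat_le hv hB _))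
    linarith
  · exact EReal.coe_le_coe_iff.mp
      (((hg_theta _).trans (min_le_right _ _)).trans (omegaV_le hv hB))
  · exact ((hg_theta _).trans (min_le_left _ _)).trans (beta_le hv hB)

lemma exists_implements_of_noNegCycle_glenHat (honto : Onto V Bud f)
    (hnc : NoNegCycle (glenHat V Bud f)) : ∃ p : A → ℝ, Implements V Bud f p := by
  obtain ⟨g, hg_nonneg, hg_theta, hg_glenHat⟩ :=
    exists_potential_of_noNegCycle hnc (fun a a' => min_le_right _ _) (theta_lt_top honto)
  exact ⟨g, implements_of_potential g hg_nonneg hg_theta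
    fun a a' => (hg_glenHat a a').trans (min_le_left _ _)⟩

end Mechanism

theorem stmt10_general {A : Type*} (V : Set (A → ℝ)) (Bud : Set EReal)
    (f : (A → ℝ) → EReal → A)
    (honto : Onto V Bud f)
    (hdelta : ∀ a a' : A, deltaHat V Bud f a a' = delta V Bud f a a') :
    (∃ p : A → ℝ, Implements V Bud f p) ↔ NoNegCycle (glen V Bud f) := by
  refine ⟨fun ⟨p, hp⟩ => noNegCycle_of_sub_le _ p (hp.sub_le_glen honto), fun hnc => ?_⟩
  rw [glen_eq_glenHat hdelta] at hnc
  exact exists_implements_of_noNegCycle_glenHat honto hnc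

/-- If `δ̂ = δ` everywhere, then `f` with fully private budgets is
implementable iff `G_{f,B}` contains no negative cycle. -/
theorem stmt10 {A : Type*} (V : Set (A → ℝ)) (Bud : Set EReal)
    (f : (A → ℝ) → EReal → A)
    (hV : NonnegV V) (hB : NonnegB Bud) (honto : Onto V Bud f)
    (hdelta : ∀ a a' : A, deltaHat V Bud f a a' = delta V Bud f a a') :
    (∃ p : A → ℝ, Implements V Bud f p) ↔ NoNegCycle (glen V Bud f) :=
  stmt10_general V Bud f honto hdelta
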